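/- The function f(δ) = (2/π)·1 for 0 ≤ δ ≤ 1 and f(δ) = (2/π)·(1 − √(1 − δ^{−2})) for δ > 1 (and 0 for δ < 0) is a probability density on ℝ, i.e., it is nonnegative and integrates to 1. -/

import Mathlib

open Real MeasureTheory

/-- The density `f_{2,1,0}`. -/
noncomputable def f210 (δ : ℝ) : ℝ :=
  if δ < 0 then 0
  else if δ ≤ 1 then 2 / Real.pi
  else 2 / Real.pi * (1 - Real.sqrt (1 - (δ ^ 2)⁻¹))

lemma f210_nonneg (δ : ℝ) : 0 ≤ f210 δ := by
  unfold f210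
  split_ifs with h1 h2
  · exact le_rfl
  · positivity
  · apply mul_nonneg (by positivity)
    have : Real.sqrt (1 - (δ ^ 2)⁻¹) ≤ 1 := by
      apply Real.sqrt_le_one.mpr
      have : 0 ≤ (δ ^ 2)⁻¹ := by positivity
      linarith
    linarith

noncomputable def g210 (x : ℝ) : ℝ :=
  2 / Real.pi * (x - Real.sqrt (x ^ 2 - 1) + Real.arctan (Real.sqrt (x ^ 2 - 1)))

lemma g210_deriv {x : ℝ} (hx : 1 < x) : HasDerivAt g210 (f210 x) x := by
  have hx0 : 0 < x := lt_trans one_pos hx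
  have hs0 : 0 < x ^ 2 - 1 := by nlinarith
  set s := Real.sqrt (x ^ 2 - 1) with hs
  have hsp : 0 < s := Real.sqrt_pos.2 hs0
  have hssq : s ^ 2 = x ^ 2 - 1 := Real.sq_sqrt hs0.le
  have h1 : HasDerivAt (fun y : ℝ => y ^ 2 - 1) (2 * x) x := by
    simpa using ((hasDerivAt_pow 2 x).sub_const 1)
  have h2 : HasDerivAt (fun y : ℝ => Real.sqrt (y ^ 2 - 1)) ((2 * x) / (2 * s)) x :=
    h1.sqrt (ne_of_gt hs0)
  have h3 : HasDerivAt (fun y : ℝ => Real.arctan (Real.sqrt (y ^ 2 - 1)))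
      (1 / (1 + s ^ 2) * ((2 * x) / (2 * s))) x := h2.arctan
  have h4 : HasDerivAt g210
      (2 / Real.pi * (1 - (2 * x) / (2 * s) + 1 / (1 + s ^ 2) * ((2 * x) / (2 * s)))) x := by
    exact (((hasDerivAt_id x).sub h2).add h3).const_mul _
  convert h4 using 1
  have hne : f210 x = 2 / Real.pi * (1 - Real.sqrt (1 - (x ^ 2)⁻¹)) := by
    unfold f210
    rw [if_neg (by linarith), if_neg (by linarith)]
  rw [hne]
  have hsq : Real.sqrt (1 - (x ^ 2)⁻¹) = s / x := by
    rw [hs, ← Real.sqrt_sq hx0.le]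
    rw [← Real.sqrt_div' _ (by positivity)]
    · congr 1
      field_simp
      rw [Real.sq_sqrt (sq_nonneg _)]
  rw [hsq]
  field_simp
  linear_combination (-s ^ 2) * hssq

lemma g210_tendsto : Filter.Tendsto g210 Filter.atTop (nhds 1) := by
  have hsqrt : Filter.Tendsto (fun x : ℝ => Real.sqrt (x ^ 2 - 1)) Filter.atTop Filter.atTop := by
    apply Filter.tendsto_atTop_mono' _ _ (Filter.tendsto_atTop_add_const_right _ (-1) Filter.tendsto_id)
    filter_upwards [Filter.eventually_ge_atTop (1:ℝ)] with x hx
    have h1 : (0:ℝ) ≤ x - 1 := by linarith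
    have : (x - 1) ^ 2 ≤ x ^ 2 - 1 := by nlinarith
    calc id x + -1 = x - 1 := by simp [sub_eq_add_neg]
    _ ≤ Real.sqrt (x ^ 2 - 1) := by
        rw [show x - 1 = Real.sqrt ((x-1)^2) from (Real.sqrt_sq h1).symm]
        exact Real.sqrt_le_sqrt (by nlinarith)
  have h1 : Filter.Tendsto (fun x : ℝ => x - Real.sqrt (x ^ 2 - 1)) Filter.atTop (nhds 0) := by
    have heq : ∀ᶠ x : ℝ in Filter.atTop,
        (fun y : ℝ => y + Real.sqrt (y ^ 2 - 1))⁻¹ x = x - Real.sqrt (x ^ 2 - 1) := by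
      filter_upwards [Filter.eventually_ge_atTop (1:ℝ)] with x hx
      have hs0 : 0 ≤ x ^ 2 - 1 := by nlinarith
      have hssq : Real.sqrt (x ^ 2 - 1) ^ 2 = x ^ 2 - 1 := Real.sq_sqrt hs0
      have hpos : 0 < x + Real.sqrt (x ^ 2 - 1) := by
        have := Real.sqrt_nonneg (x ^ 2 - 1); linarith
      simp only [Pi.inv_apply]
      rw [inv_eq_iff_eq_inv, eq_comm, inv_eq_iff_eq_inv, eq_comm] at *
      field_simp
      nlinarith
    apply Filter.Tendsto.congr' heq
    apply Filter.Tendsto.inv_tendsto_atTop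
    apply Filter.tendsto_atTop_mono (fun x => ?_) Filter.tendsto_id
    have := Real.sqrt_nonneg (x ^ 2 - 1)
    simp only [id]
    linarith
  have h2 : Filter.Tendsto (fun x : ℝ => Real.arctan (Real.sqrt (x ^ 2 - 1)))
      Filter.atTop (nhds (Real.pi / 2)) :=
    (Real.tendsto_arctan_atTop.mono_right nhdsWithin_le_nhds).comp hsqrt
  have h3 := ((h1.add h2).const_mul (2 / Real.pi))
  have hpi := Real.pi_ne_zero
  convert h3 using 2
  · rfl
  · field_simp
    ring

lemma f210_eqOn_Icc : Set.EqOn (fun _ : ℝ => 2 / Real.pi) f210 (Set.Icc 0 1) := by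
  intro x hx
  simp only [Set.mem_Icc] at hx
  unfold f210
  rw [if_neg (by linarith), if_pos hx.2]

lemma f210_eqOn_Iio : Set.EqOn (fun _ : ℝ => (0:ℝ)) f210 (Set.Iio 0) := by
  intro x hx
  simp only [Set.mem_Iio] at hx
  unfold f210
  rw [if_pos hx]

lemma f210_integrableOn_Iic : IntegrableOn f210 (Set.Iic 1) := by
  rw [← Set.Iio_union_Icc_eq_Iic (zero_le_one)]
  apply IntegrableOn.union
  · exact (integrableOn_zero).congr_fun f210_eqOn_Iio measurableSet_Iio
  · exact ((integrableOn_const_iff).mpr (Or.inr (by simp))).congr_fun f210_eqOn_Icc measurableSet_Icc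

lemma g210_contWithin : ContinuousWithinAt g210 (Set.Ici 1) 1 := by
  apply Continuous.continuousWithinAt
  unfold g210
  exact continuous_const.mul ((continuous_id.sub ((continuous_pow 2).sub continuous_const).sqrt).add
    (Real.continuous_arctan.comp ((continuous_pow 2).sub continuous_const).sqrt))

theorem f210_is_probability_density :
    (∀ δ : ℝ, 0 ≤ f210 δ) ∧ (∫ δ : ℝ, f210 δ) = 1 := by
  refine ⟨f210_nonneg, ?_⟩
  have hderiv : ∀ x ∈ Set.Ioi (1:ℝ), HasDerivAt g210 (f210 x) x := fun x hx => g210_deriv hx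
  have hpos : ∀ x ∈ Set.Ioi (1:ℝ), 0 ≤ f210 x := fun x _ => f210_nonneg x
  have hIoi : ∫ x in Set.Ioi (1:ℝ), f210 x = 1 - g210 1 :=
    integral_Ioi_of_hasDerivAt_of_nonneg g210_contWithin hderiv hpos g210_tendsto
  have hg1 : g210 1 = 2 / Real.pi := by
    unfold g210
    norm_num
  have hintIoi : IntegrableOn f210 (Set.Ioi 1) :=
    integrableOn_Ioi_deriv_of_nonneg g210_contWithin hderiv hpos g210_tendsto
  rw [← intervalIntegral.integral_Iic_add_Ioi f210_integrableOn_Iic hintIoi, hIoi, hg1]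
  have hIic : ∫ x in Set.Iic (1:ℝ), f210 x = 2 / Real.pi := by
    rw [← Set.Iio_union_Icc_eq_Iic (zero_le_one : (0:ℝ) ≤ 1),
      setIntegral_union (by
        rw [Set.disjoint_left]
        intro a ha hb
        exact absurd hb.1 (not_le.mpr ha)) measurableSet_Icc
        ((integrableOn_zero).congr_fun f210_eqOn_Iio measurableSet_Iio)
        (((integrableOn_const_iff).mpr (Or.inr (by simp))).congr_fun f210_eqOn_Icc measurableSet_Icc)]
    rw [← setIntegral_congr_fun measurableSet_Iio f210_eqOn_Iio,
      ← setIntegral_congr_fun measurableSet_Icc f210_eqOn_Icc]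
    simp [Real.volume_Icc]
  rw [hIic]
  ring
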